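/- (Anti-triangular inequality for the generalized Hilbert metric) In a complete semimodule X over a commutative complete idempotent semiring K, define d_H(x,y) = (x\y)(y\x). Then for all x, y, z ∈ X, d_H(x,z) ≥ d_H(x,y)·d_H(y,z). -/

import Mathlib

/-!
The residual `x\y` is the largest scalar carrying `x` below `y`, so residuals compose:
`x(x\y)(y\z) ≤ y(y\z) ≤ z` gives `(x\y)(y\z) ≤ x\z`. Regrouping the four factors of
`d_H(x,y) d_H(y,z)` as `((x\y)(y\z)) ((z\y)(y\x))` and applying this twice bounds the
product by `(x\z)(z\x)`.
-/

variable {K : Type*} [CompleteLattice K] [CommMonoid K]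
variable {X : Type*} [CompleteLattice X]

/-- The residual `x\y` of the paper. -/
def lres (act : X → K → X) (x y : X) : K := sSup {l : K | act x l ≤ y}

theorem monotone_of_map_sSup {α β : Type*} [CompleteLattice α] [CompleteLattice β]
    {f : α → β} (hf : ∀ S : Set α, f (sSup S) = ⨆ a ∈ S, f a) : Monotone f :=
  (ScottContinuous.of_map_sSup fun d _ _ => by rw [hf, sSup_image]).monotone

theorem mul_le_mul_of_mul_sSup (hK : ∀ (a : K) (S : Set K), a * sSup S = ⨆ b ∈ S, a * b)
    {a b c d : K} (hab : a ≤ b) (hcd : c ≤ d) : a * c ≤ b * d :=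
  calc a * c = c * a := mul_comm a c
    _ ≤ c * b := monotone_of_map_sSup (hK c) hab
    _ = b * c := mul_comm c b
    _ ≤ b * d := monotone_of_map_sSup (hK b) hcd

theorem act_lres_le {K X : Type*} [CompleteLattice K] [CompleteLattice X] {act : X → K → X}
    (hsupS : ∀ (x : X) (S : Set K), act x (sSup S) = ⨆ a ∈ S, act x a) (u v : X) :
    act u (lres act u v) ≤ v := by
  rw [lres, hsupS]
  exact iSup₂_le fun _ ha => ha

theorem lres_mul_lres_le {act : X → K → X}
    (hassoc : ∀ (x : X) (a b : K), act (act x a) b = act x (a * b))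
    (hmono : ∀ a : K, Monotone (act · a))
    (hsupS : ∀ (x : X) (S : Set K), act x (sSup S) = ⨆ a ∈ S, act x a) (u v w : X) :
    lres act u v * lres act v w ≤ lres act u w := by
  refine le_sSup ?_
  change act u (lres act u v * lres act v w) ≤ w
  rw [← hassoc]
  exact (hmono _ (act_lres_le hsupS u v)).trans (act_lres_le hsupS v w)

theorem hilbert_anti_triangular_general
    (act : X → K → X)
    (hKl : ∀ (a : K) (S : Set K), a * sSup S = ⨆ b ∈ S, a * b)
    (hassoc : ∀ (x : X) (a b : K), act (act x a) b = act x (a * b))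
    (hsupS : ∀ (x : X) (S : Set K), act x (sSup S) = ⨆ a ∈ S, act x a)
    (hsupV : ∀ (U : Set X) (a : K), act (sSup U) a = ⨆ x ∈ U, act x a)
    (x y z : X) :
    (lres act x y * lres act y x) * (lres act y z * lres act z y) ≤
      lres act x z * lres act z x := by
  have hmono : ∀ a : K, Monotone (act · a) := fun a => monotone_of_map_sSup (hsupV · a)
  have hcomp := lres_mul_lres_le hassoc hmono hsupS
  calc (lres act x y * lres act y x) * (lres act y z * lres act z y)
      = (lres act x y * lres act y z) * (lres act z y * lres act y x) := by
        rw [mul_mul_mul_comm, mul_comm (lres act y x)]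
    _ ≤ lres act x z * lres act z x := mul_le_mul_of_mul_sSup hKl (hcomp x y z) (hcomp z y x)

/-- Anti-triangular inequality for the generalized Hilbert metric
d_H(x,y) = (x\y)(y\x) over a commutative complete idempotent semiring:
d_H(x,z) ≥ d_H(x,y)·d_H(y,z). -/
theorem hilbert_anti_triangular
    (act : X → K → X)
    (hKl : ∀ (a : K) (S : Set K), a * sSup S = ⨆ b ∈ S, a * b)
    (hKr : ∀ (a : K) (S : Set K), sSup S * a = ⨆ b ∈ S, b * a)
    (hassoc : ∀ (x : X) (a b : K), act (act x a) b = act x (a * b))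
    (hone : ∀ x : X, act x 1 = x)
    (hsupS : ∀ (x : X) (S : Set K), act x (sSup S) = ⨆ a ∈ S, act x a)
    (hsupV : ∀ (U : Set X) (a : K), act (sSup U) a = ⨆ x ∈ U, act x a)
    (x y z : X) :
    (lres act x y * lres act y x) * (lres act y z * lres act z y) ≤
      lres act x z * lres act z x :=
  hilbert_anti_triangular_general act hKl hassoc hsupS hsupV x y z
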